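/- arXiv:2510.20722 — 3 statements merged into one kernel-verified Lean document; each statement's English description precedes it below -/
import Mathlib

section
/- Fix d ≥ 1 and let ρ₁,…,ρₙ be d×d density matrices that are linearly independent over ℝ (as elements of the real vector space of Hermitian matrices). Then the fragment (ρ₁,…,ρₙ; 𝓔_all) admits a noncontextual ontological model, where 𝓔_all is the set of all effects, i.e. all Hermitian E with 0 ≤ E ≤ I. (Linearly independent states admit a classical explanation even when paired with every quantum measurement.) -/
open Matrix
open scoped ComplexOrder

/-- The real vector space of `d × d` complex Hermitian matrices. -/
abbrev HermMat (d : ℕ) : Type := selfAdjoint (Matrix (Fin d) (Fin d) ℂ)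

/-- A density matrix: Hermitian, positive semidefinite, trace one. -/
def IsDensity {d : ℕ} (ρ : HermMat d) : Prop :=
  (ρ : Matrix (Fin d) (Fin d) ℂ).PosSemidef ∧ (ρ : Matrix (Fin d) (Fin d) ℂ).trace = 1

/-- An effect: Hermitian `E` with `0 ≤ E` and `E ≤ I` in the Loewner order. -/
def IsEffect {d : ℕ} (E : HermMat d) : Prop :=
  (E : Matrix (Fin d) (Fin d) ℂ).PosSemidef ∧
    ((1 : Matrix (Fin d) (Fin d) ℂ) - (E : Matrix (Fin d) (Fin d) ℂ)).PosSemidef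

/-- The set of all effects. -/
def allEffects (d : ℕ) : Set (HermMat d) := {E | IsEffect E}

/-- The identity matrix, as a Hermitian matrix. -/
def oneHerm (d : ℕ) : HermMat d :=
  ⟨1, by simp [selfAdjoint.mem_iff]⟩

/-- A noncontextual ontological model for the fragment `(ρ₁, …, ρₙ; 𝓔)`:
a finite set `Λ` together with `ℝ`-linear maps `M` and `Ξ` from the real vector space of
Hermitian matrices to real-valued functions on `Λ` such that (i) each `M (ρ i)` is a
probability distribution on `Λ`, (ii) `Ξ E` is pointwise nonnegative for `E ∈ 𝓔`,
(iii) `Ξ` sends the identity to the constant function `1`, and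
(iv) `Tr (E ρᵢ) = ∑ λ, M (ρ i) λ * Ξ E λ` for all `i` and `E ∈ 𝓔`. -/
def AdmitsNCModel {n d : ℕ} (ρ : Fin n → HermMat d) (𝓔 : Set (HermMat d)) : Prop :=
  ∃ (Λ : Type) (_ : Fintype Λ) (M Ξ : HermMat d →ₗ[ℝ] (Λ → ℝ)),
    (∀ i, (∀ l, 0 ≤ M (ρ i) l) ∧ (∑ l, M (ρ i) l) = 1) ∧
    (∀ E ∈ 𝓔, ∀ l, 0 ≤ Ξ E l) ∧
    (Ξ (oneHerm d) = fun _ => 1) ∧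
    (∀ i, ∀ E ∈ 𝓔,
      ((E : Matrix (Fin d) (Fin d) ℂ) * (ρ i : Matrix (Fin d) (Fin d) ℂ)).trace
        = ((∑ l, M (ρ i) l * Ξ E l : ℝ) : ℂ))

/-!
Take `Λ` to be the index set of the states. Linear independence lets `M` send each `ρᵢ` to the
point mass at `i` (extend the coordinate functionals of the span to all Hermitian matrices), and
`Ξ E` is the vector `i ↦ Tr (E ρᵢ)`, so the model reproduces the statistics by construction.
Positivity of `Ξ` on effects is positivity of `Tr (A B)` for positive semidefinite `A`, `B`
(write `A = C* C` and cycle the trace), and `Ξ I = 1` is `Tr ρᵢ = 1`.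
-/
theorem LinearIndependent.exists_linearMap_apply_eq_single {K V ι : Type*} [Field K]
    [AddCommGroup V] [Module K V] [Fintype ι] [DecidableEq ι] {v : ι → V}
    (hv : LinearIndependent K v) : ∃ M : V →ₗ[K] (ι → K), ∀ i, M (v i) = Pi.single i 1 := by
  obtain ⟨M, hM⟩ := (Fintype.linearCombination K v).exists_leftInverse_of_injective
    (LinearMap.ker_eq_bot.mpr hv.fintypeLinearCombination_injective)
  refine ⟨M, fun i => ?_⟩
  simpa using LinearMap.congr_fun hM (Pi.single i 1)

theorem Matrix.PosSemidef.trace_mul_nonneg {𝕜 n : Type*} [RCLike 𝕜] [Fintype n]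
    {A B : Matrix n n 𝕜} (hA : A.PosSemidef) (hB : B.PosSemidef) : 0 ≤ (A * B).trace := by
  classical
  open scoped MatrixOrder in
  obtain ⟨C, rfl⟩ := CStarAlgebra.nonneg_iff_eq_star_mul_self.mp hA.nonneg
  rw [Matrix.mul_assoc, Matrix.trace_mul_comm]
  exact (hB.mul_mul_conjTranspose_same C).trace_nonneg

noncomputable def reTraceMulLinearMap {ι : Type*} {d : ℕ} (ρ : ι → HermMat d) :
    HermMat d →ₗ[ℝ] (ι → ℝ) where
  toFun E i := ((E : Matrix (Fin d) (Fin d) ℂ) * (ρ i : Matrix (Fin d) (Fin d) ℂ)).trace.re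
  map_add' E F := by
    funext i
    simp [add_mul]
  map_smul' c E := by
    funext i
    simp [selfAdjoint.val_smul, Complex.real_smul]

theorem reTraceMulLinearMap_apply {ι : Type*} {d : ℕ} (ρ : ι → HermMat d) (E : HermMat d)
    (i : ι) : reTraceMulLinearMap ρ E i =
      ((E : Matrix (Fin d) (Fin d) ℂ) * (ρ i : Matrix (Fin d) (Fin d) ℂ)).trace.re :=
  rfl

theorem linearIndependent_states_admit_ncModel_general
    (d n : ℕ) (ρ : Fin n → HermMat d)
    (hρ : ∀ i, IsDensity (ρ i))
    (hLI : LinearIndependent ℝ ρ) :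
    AdmitsNCModel ρ (allEffects d) := by
  obtain ⟨M, hM⟩ := hLI.exists_linearMap_apply_eq_single
  have htrace_nonneg : ∀ E ∈ allEffects d, ∀ i,
      0 ≤ ((E : Matrix (Fin d) (Fin d) ℂ) * (ρ i : Matrix (Fin d) (Fin d) ℂ)).trace :=
    fun E hE i => hE.1.trace_mul_nonneg (hρ i).1
  refine ⟨Fin n, inferInstance, M, reTraceMulLinearMap ρ, fun i => ?_, fun E hE l => ?_,
    ?_, fun i E hE => ?_⟩
  · rw [hM]
    exact ⟨fun l => by simp [Pi.single_apply, apply_ite], by simp⟩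
  · exact (Complex.nonneg_iff.mp (htrace_nonneg E hE l)).1
  · funext i
    simp [reTraceMulLinearMap_apply, oneHerm, (hρ i).2]
  · simp only [hM, Pi.single_apply, ite_mul, one_mul, zero_mul, Finset.sum_ite_eq',
      Finset.mem_univ, if_true, reTraceMulLinearMap_apply]
    exact Complex.eq_re_of_ofReal_le (r := 0) (by exact_mod_cast htrace_nonneg E hE i)

/-- linearly independent density matrices, paired with the set of all effects,
admit a noncontextual ontological model. -/
theorem linearIndependent_states_admit_ncModel
    (d n : ℕ) (hd : 1 ≤ d) (ρ : Fin n → HermMat d)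
    (hρ : ∀ i, IsDensity (ρ i))
    (hLI : LinearIndependent ℝ ρ) :
    AdmitsNCModel ρ (allEffects d) :=
  linearIndependent_states_admit_ncModel_general d n ρ hρ hLI
end

section
/- Fix d ≥ 1 and let ρ₁,…,ρₙ (n ≥ 2) be pairwise distinct rank-one orthogonal projections on ℂ^d (pure states) that are linearly dependent over ℝ as Hermitian matrices. Then the fragment (ρ₁,…,ρₙ; 𝓔_all) admits NO noncontextual ontological model, where 𝓔_all is the set of all effects. (A linearly dependent set of pure states, paired with all measurements, is contextual.) -/
/-!
Fix an ontic state `λ` of a noncontextual model. The functional `E ↦ Ξ E λ` is unital and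
nonnegative on effects, hence on all positive semidefinite matrices, so it is `E ↦ Tr (E τ)` for a
density matrix `τ`. Since `Tr (ρᵢ ρᵢ) = 1` and `Ξ ρᵢ ≤ 1`, the response `Ξ ρᵢ λ` equals `1` on the
support of `M ρᵢ`, and for a pure state `ρᵢ` this forces `τ = ρᵢ`. Hence distinct pure states have
disjointly supported distributions `M ρᵢ`; these are linearly independent, and by linearity of `M`
so are the `ρᵢ`.
-/

open Matrix
open scoped ComplexOrder

/-- A pure state: a density matrix that is a rank-one orthogonal projection,
equivalently a density matrix `ρ` with `ρ² = ρ`. -/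
def IsPureState {d : ℕ} (ρ : HermMat d) : Prop :=
  IsDensity ρ ∧
    (ρ : Matrix (Fin d) (Fin d) ℂ) * (ρ : Matrix (Fin d) (Fin d) ℂ) = (ρ : Matrix (Fin d) (Fin d) ℂ)

open scoped MatrixOrder ComplexStarModule

section LinearIndependence

variable {ι Λ K : Type*} [Field K]

theorem linearIndependent_of_disjoint_support (v : ι → Λ → K) (hv : ∀ i, v i ≠ 0)
    (hdisj : ∀ i j l, v i l ≠ 0 → v j l ≠ 0 → i = j) : LinearIndependent K v := by
  classical
  refine linearIndependent_iff'.mpr fun s g hg i hi => ?_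
  obtain ⟨l, hl⟩ := Function.ne_iff.mp (hv i)
  have heval : ∑ j ∈ s, g j * v j l = g i * v i l := by
    refine Finset.sum_eq_single_of_mem i hi fun j _ hji => ?_
    by_cases hj : v j l = 0
    · rw [hj, mul_zero]
    · exact absurd (hdisj j i l hj hl) hji
  have hzero : ∑ j ∈ s, g j * v j l = 0 := by
    simpa using congrFun hg l
  exact (mul_eq_zero.mp (heval ▸ hzero)).resolve_right hl

end LinearIndependence

theorem eq_one_of_sum_mul_eq_one {Λ : Type*} [Fintype Λ] {p f : Λ → ℝ} (hp : ∀ l, 0 ≤ p l)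
    (hp1 : ∑ l, p l = 1) (hf : ∀ l, f l ≤ 1) (hpf : ∑ l, p l * f l = 1) {l : Λ} (hl : p l ≠ 0) :
    f l = 1 := by
  have hzero : ∑ l, p l * (1 - f l) = 0 := by
    simp only [mul_sub, mul_one, Finset.sum_sub_distrib, hp1, hpf, sub_self]
  have hterm := (Fintype.sum_eq_zero_iff_of_nonneg fun l =>
    mul_nonneg (hp l) (sub_nonneg.mpr (hf l))).mp hzero
  have := (mul_eq_zero.mp (congrFun hterm l)).resolve_left hl
  linarith

namespace Matrix

variable {n 𝕜 : Type*} [Fintype n] [RCLike 𝕜]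

theorem PosSemidef.trace_mul_nonneg_s3 {A B : Matrix n n 𝕜} (hA : A.PosSemidef)
    (hB : B.PosSemidef) : 0 ≤ (A * B).trace := by
  classical
  obtain ⟨S, rfl⟩ := CStarAlgebra.nonneg_iff_eq_star_mul_self.mp hB.nonneg
  rw [← mul_assoc, trace_mul_comm, ← mul_assoc, star_eq_conjTranspose]
  exact (hA.mul_mul_conjTranspose_same S).trace_nonneg

theorem PosSemidef.le_trace_smul_one [DecidableEq n] {A : Matrix n n 𝕜}
    (hA : A.PosSemidef) : A ≤ A.trace • 1 := by
  set D : Matrix n n 𝕜 := diagonal (RCLike.ofReal ∘ hA.1.eigenvalues)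
  have hconj : A.trace • 1 - A =
      Unitary.conjStarAlgAut 𝕜 _ hA.1.eigenvectorUnitary (A.trace • 1 - D) := by
    rw [map_sub, map_smul, map_one, ← hA.1.spectral_theorem]
  rw [le_iff, hconj, Unitary.conjStarAlgAut_apply,
    Unitary.isUnit_coe.posSemidef_star_right_conjugate_iff, smul_one_eq_diagonal, diagonal_sub]
  refine PosSemidef.diagonal fun i => ?_
  rw [Pi.zero_apply, Function.comp_apply, hA.1.trace_eq_sum_eigenvalues,
    ← RCLike.ofReal_sum, ← RCLike.ofReal_sub, RCLike.ofReal_nonneg, sub_nonneg]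
  exact Finset.single_le_sum (fun j _ => hA.eigenvalues_nonneg j) (Finset.mem_univ i)

/-- Writing `D = P - τ`, `Tr (Dᴴ D) = Tr (τ²) - 1 ≤ Tr (τ)² - 1 = 0`. -/
theorem PosSemidef.eq_of_trace_mul_eq_one [DecidableEq n] {P τ : Matrix n n 𝕜}
    (hτ : τ.PosSemidef) (hτ1 : τ.trace = 1) (hP : IsStarProjection P) (hP1 : P.trace = 1)
    (hPτ : (P * τ).trace = 1) : τ = P := by
  have hsq : (τ * τ).trace ≤ 1 := by
    have := hτ.trace_mul_nonneg_s3 hτ.le_trace_smul_one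
    rwa [hτ1, one_smul, mul_sub, mul_one, trace_sub, hτ1, sub_nonneg] at this
  have hD : ((P - τ)ᴴ * (P - τ)).trace = (τ * τ).trace - 1 := by
    rw [conjTranspose_sub, ← star_eq_conjTranspose, hP.isSelfAdjoint, hτ.1.eq, sub_mul, mul_sub,
      mul_sub, hP.isIdempotentElem.eq, trace_sub, trace_sub, trace_sub, trace_mul_comm τ P, hP1,
      hPτ]
    ring
  have hzero : ((P - τ)ᴴ * (P - τ)).trace = 0 :=
    le_antisymm (hD ▸ sub_nonpos.mpr hsq) (posSemidef_conjTranspose_mul_self _).trace_nonneg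
  exact (sub_eq_zero.mp (trace_conjTranspose_mul_self_eq_zero_iff.mp hzero)).symm

end Matrix

section ComplexExtension

variable {A : Type*} [AddCommGroup A] [Module ℂ A] [StarAddMonoid A] [StarModule ℂ A]

noncomputable def complexExtend (φ : selfAdjoint A →ₗ[ℝ] ℝ) : A →ₗ[ℂ] ℂ :=
  Module.Dual.extendRCLike (φ ∘ₗ realPart)

variable (φ : selfAdjoint A →ₗ[ℝ] ℝ)

theorem complexExtend_apply (a : A) :
    complexExtend φ a = φ (ℜ a) + Complex.I * φ (ℑ a) := by
  simp [complexExtend, Module.Dual.extendRCLike_apply]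

theorem complexExtend_coe (a : selfAdjoint A) : complexExtend φ a = φ a := by
  rw [complexExtend_apply, a.2.imaginaryPart, show ℜ (a : A) = a from Subtype.ext a.2.coe_realPart]
  simp

theorem complexExtend_star (a : A) : complexExtend φ (star a) = star (complexExtend φ a) := by
  have hre : ℜ (star a) = ℜ a := Subtype.ext <| by simp [realPart_apply_coe, add_comm]
  have him : ℑ (star a) = -ℑ a := Subtype.ext <| by
    simp only [imaginaryPart_apply_coe, star_star, NegMemClass.coe_neg]
    module
  apply Complex.ext <;> simp [complexExtend_apply, hre, him]

end ComplexExtension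

namespace Matrix

variable {n R : Type*} [DecidableEq n] [CommSemiring R]

def traceRepr (ψ : Matrix n n R →ₗ[R] R) : Matrix n n R :=
  of fun i j => ψ (single j i 1)

theorem trace_mul_traceRepr [Fintype n] (ψ : Matrix n n R →ₗ[R] R) (A : Matrix n n R) :
    (A * traceRepr ψ).trace = ψ A := by
  conv_rhs => rw [matrix_eq_sum_single A]
  simp only [map_sum, trace, diag, mul_apply, traceRepr, of_apply]
  refine Finset.sum_congr rfl fun i _ => Finset.sum_congr rfl fun j _ => ?_
  rw [← smul_eq_mul, ← map_smul, smul_single, smul_eq_mul, mul_one]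

end Matrix

section DensityMatrix

variable {n : Type*} [DecidableEq n] (φ : selfAdjoint (Matrix n n ℂ) →ₗ[ℝ] ℝ)

noncomputable def densityMatrix : Matrix n n ℂ := traceRepr (complexExtend φ)

theorem trace_mul_densityMatrix [Fintype n] (A : selfAdjoint (Matrix n n ℂ)) :
    ((A : Matrix n n ℂ) * densityMatrix φ).trace = φ A := by
  rw [densityMatrix, trace_mul_traceRepr, complexExtend_coe]

theorem densityMatrix_isHermitian : (densityMatrix φ).IsHermitian := by
  ext i j
  simp only [densityMatrix, traceRepr, conjTranspose_apply, of_apply, ← complexExtend_star,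
    star_eq_conjTranspose, conjTranspose_single, star_one]

theorem densityMatrix_posSemidef [Fintype n]
    (hφ : ∀ A : selfAdjoint (Matrix n n ℂ), (A : Matrix n n ℂ).PosSemidef → 0 ≤ φ A) :
    (densityMatrix φ).PosSemidef := by
  refine .of_dotProduct_mulVec_nonneg (densityMatrix_isHermitian φ) fun x => ?_
  set xx : selfAdjoint (Matrix n n ℂ) :=
    ⟨vecMulVec x (star x), (posSemidef_vecMulVec_self_star x).1⟩
  have h := trace_mul_densityMatrix φ xx
  rw [vecMulVec_mul, trace_vecMulVec, dotProduct_comm, ← dotProduct_mulVec] at h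
  rw [h]
  exact_mod_cast hφ xx (posSemidef_vecMulVec_self_star x)

end DensityMatrix

section Effects

variable {d : ℕ}

theorem isEffect_of_isStarProjection {E : HermMat d}
    (hE : IsStarProjection (E : Matrix (Fin d) (Fin d) ℂ)) : IsEffect E :=
  ⟨nonneg_iff_posSemidef.mp hE.nonneg, nonneg_iff_posSemidef.mp hE.one_sub.nonneg⟩

theorem IsEffect.one_sub {E : HermMat d} (hE : IsEffect E) : IsEffect (oneHerm d - E) :=
  ⟨hE.2, by simpa [oneHerm] using hE.1⟩

theorem isEffect_inv_one_add_trace_smul {A : HermMat d}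
    (hA : (A : Matrix (Fin d) (Fin d) ℂ).PosSemidef) :
    IsEffect ((1 + (A : Matrix (Fin d) (Fin d) ℂ).trace.re)⁻¹ • A) := by
  set t := (A : Matrix (Fin d) (Fin d) ℂ).trace.re
  have htr : (A : Matrix (Fin d) (Fin d) ℂ).trace = t :=
    Complex.eq_re_of_ofReal_le hA.trace_nonneg
  have ht : 0 ≤ t := (Complex.nonneg_iff.mp hA.trace_nonneg).1
  have hc : 0 ≤ (1 + t)⁻¹ := by positivity
  refine ⟨hA.smul hc, ?_⟩
  have key : 1 - (1 + t)⁻¹ • (A : Matrix (Fin d) (Fin d) ℂ) =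
      (1 + t)⁻¹ • (1 + ((A : Matrix (Fin d) (Fin d) ℂ).trace • 1 - A)) := by
    have h1 : (1 + t)⁻¹ * t = 1 - (1 + t)⁻¹ := by field_simp; ring
    rw [htr, Complex.coe_smul, smul_add, smul_sub, smul_smul, h1, sub_smul, one_smul]
    abel
  show (1 - (1 + t)⁻¹ • (A : Matrix (Fin d) (Fin d) ℂ)).PosSemidef
  rw [key]
  exact (PosSemidef.one.add hA.le_trace_smul_one).smul hc

theorem IsPureState.isStarProjection {ρ : HermMat d} (hρ : IsPureState ρ) :
    IsStarProjection (ρ : Matrix (Fin d) (Fin d) ℂ) :=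
  ⟨hρ.2, ρ.2⟩

variable (φ : HermMat d →ₗ[ℝ] ℝ)

theorem map_nonneg_of_posSemidef (hpos : ∀ E, IsEffect E → 0 ≤ φ E) {A : HermMat d}
    (hA : (A : Matrix (Fin d) (Fin d) ℂ).PosSemidef) : 0 ≤ φ A := by
  have h := hpos _ (isEffect_inv_one_add_trace_smul hA)
  rw [map_smul, smul_eq_mul] at h
  have ht : 0 ≤ (A : Matrix (Fin d) (Fin d) ℂ).trace.re :=
    (Complex.nonneg_iff.mp hA.trace_nonneg).1
  exact nonneg_of_mul_nonneg_right h (by positivity)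

theorem map_le_one_of_isEffect (hpos : ∀ E, IsEffect E → 0 ≤ φ E) (hone : φ (oneHerm d) = 1)
    {E : HermMat d} (hE : IsEffect E) : φ E ≤ 1 := by
  have h := hpos _ hE.one_sub
  rw [map_sub, hone, sub_nonneg] at h
  exact h

theorem IsPureState.eq_of_map_eq_one (hpos : ∀ E, IsEffect E → 0 ≤ φ E)
    (hone : φ (oneHerm d) = 1) {ρ σ : HermMat d} (hρ : IsPureState ρ)
    (hσ : IsPureState σ) (hφρ : φ ρ = 1) (hφσ : φ σ = 1) : ρ = σ := by
  have hτ := densityMatrix_posSemidef φ fun A hA => map_nonneg_of_posSemidef φ hpos hA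
  have hτ1 : (densityMatrix φ).trace = 1 := by
    have h := trace_mul_densityMatrix φ (oneHerm d)
    rwa [hone, Complex.ofReal_one, show ((oneHerm d : HermMat d) : Matrix (Fin d) (Fin d) ℂ) = 1
      from rfl, one_mul] at h
  have key : ∀ ρ : HermMat d, IsPureState ρ → φ ρ = 1 → densityMatrix φ = ρ := fun ρ hρ h =>
    hτ.eq_of_trace_mul_eq_one hτ1 hρ.isStarProjection hρ.1.2
      (by rw [trace_mul_densityMatrix, h, Complex.ofReal_one])
  exact Subtype.ext ((key ρ hρ hφρ).symm.trans (key σ hσ hφσ))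

end Effects

theorem linearDependent_pure_states_contextual_general
    (d n : ℕ) (ρ : Fin n → HermMat d)
    (hpure : ∀ i, IsPureState (ρ i))
    (hdist : Function.Injective ρ)
    (hLD : ¬ LinearIndependent ℝ ρ) :
    ¬ AdmitsNCModel ρ (allEffects d) := by
  rintro ⟨Λ, _, M, Ξ, hM, hΞpos, hΞone, hTr⟩
  let φ : Λ → HermMat d →ₗ[ℝ] ℝ := fun l => LinearMap.proj l ∘ₗ Ξ
  have hpos : ∀ l E, IsEffect E → 0 ≤ φ l E := fun l E hE => hΞpos E hE l
  have hone : ∀ l, φ l (oneHerm d) = 1 := fun l => congrFun hΞone l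
  have hEff : ∀ i, IsEffect (ρ i) := fun i =>
    isEffect_of_isStarProjection (hpure i).isStarProjection
  have hsupp : ∀ i l, M (ρ i) l ≠ 0 → φ l (ρ i) = 1 := by
    intro i l hl
    have hsum := hTr i (ρ i) (hEff i)
    rw [(hpure i).2, (hpure i).1.2] at hsum
    exact eq_one_of_sum_mul_eq_one (hM i).1 (hM i).2
      (fun l => map_le_one_of_isEffect (φ l) (hpos l) (hone l) (hEff i))
      (by exact_mod_cast hsum.symm) hl
  apply hLD
  refine LinearIndependent.of_comp M (linearIndependent_of_disjoint_support _ (fun i hi => ?_)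
    fun i j l hi hj => hdist ?_)
  · simpa [show M (ρ i) = 0 from hi] using (hM i).2
  · exact (hpure i).eq_of_map_eq_one (φ l) (hpos l) (hone l) (hpure j) (hsupp i l hi)
      (hsupp j l hj)

/-- pairwise distinct pure states that are linearly dependent over `ℝ`,
paired with the set of all effects, admit no noncontextual ontological model. -/
theorem linearDependent_pure_states_contextual
    (d n : ℕ) (hd : 1 ≤ d) (hn : 2 ≤ n) (ρ : Fin n → HermMat d)
    (hpure : ∀ i, IsPureState (ρ i))
    (hdist : Function.Injective ρ)
    (hLD : ¬ LinearIndependent ℝ ρ) :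
    ¬ AdmitsNCModel ρ (allEffects d) :=
  linearDependent_pure_states_contextual_general d n ρ hpure hdist hLD
end

section
/- There exists ε > 0 with the following property: there are a finite set Λ and ℝ-linear maps M and Ξ from the real vector space of 2×2 Hermitian matrices to the real-valued functions on Λ such that (i) M(ρ) is a probability distribution on Λ for every 2×2 density matrix ρ with ‖ρ − I/2‖ ≤ ε (Frobenius norm); (ii) Ξ(E)(λ) ≥ 0 for every effect E (Hermitian with 0 ≤ E ≤ I) and every λ ∈ Λ; (iii) Ξ(I) is the constant function 1; and (iv) Tr(E ρ) = Σ_{λ∈Λ} M(ρ)(λ) Ξ(E)(λ) for every such state ρ and every effect E. (An ε-ball of qubit states around the maximally mixed state, paired with all effects, admits a noncontextual explanation.) -/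
/-!
Write a Hermitian `2 × 2` matrix as `A = (t_A • 1 + r_A ⬝ σ) / 2`, with `t_A = Tr A` and Bloch
vector `r_A ∈ ℝ³`, so that `Tr (E ρ) = (t_E t_ρ + r_E ⬝ r_ρ) / 2`. Take `Λ` to be the eight vertices
`s ∈ {±1}³` of the cube, `M ρ s = (t_ρ + 2 s ⬝ r_ρ) / 8` and `Ξ E s = (t_E + s ⬝ r_E / 2) / 2`.
Since `∑ₛ sᵢ sⱼ = 8 δᵢⱼ`, the factors `2` and `1 / 2` cancel and `∑ₛ M ρ s * Ξ E s = Tr (E ρ)`.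
Both maps are nonnegative because `|s ⬝ r| ≤ √3 |r|`: for an effect `|r_E| ≤ t_E`, and for a state
with `‖ρ - 1/2‖ ≤ 1/5` one has `|r_ρ| = √2 ‖ρ - 1/2‖ ≤ √2 / 5 < 1 / (2√3)`.
-/

open Matrix
open scoped ComplexOrder

/-- The Frobenius (Hilbert–Schmidt) norm of a `2 × 2` complex matrix. -/
noncomputable def frobeniusNorm (A : Matrix (Fin 2) (Fin 2) ℂ) : ℝ :=
  Real.sqrt (∑ i, ∑ j, ‖A i j‖ ^ 2)

open Finset

section SignVectors

variable {ι : Type*}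

def signVec (s : ι → ℤˣ) : ι → ℝ := fun i => ((s i : ℤ) : ℝ)

lemma abs_signVec (s : ι → ℤˣ) (i : ι) : |signVec s i| = 1 := by
  rcases Int.units_eq_one_or (s i) with h | h <;> simp [signVec, h]

lemma signVec_mul_self (s : ι → ℤˣ) (i : ι) : signVec s i * signVec s i = 1 := by
  rw [← abs_mul_abs_self, abs_signVec, one_mul]

variable [DecidableEq ι]

lemma signVec_mulSingle_neg_one_mul (s : ι → ℤˣ) (i j : ι) :
    signVec (Pi.mulSingle i (-1) * s) j = if j = i then -signVec s j else signVec s j := by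
  by_cases h : j = i
  · subst h; simp [signVec]
  · simp [signVec, h]

variable [Fintype ι]

lemma natCast_card_signs : (Fintype.card (ι → ℤˣ) : ℝ) = 2 ^ Fintype.card ι := by
  simp [Fintype.card_pi]

lemma sum_eq_zero_of_flip (i : ι) {f : (ι → ℤˣ) → ℝ}
    (hf : ∀ s, f (Pi.mulSingle i (-1) * s) = -f s) : ∑ s, f s = 0 := by
  have h := Equiv.sum_comp (Equiv.mulLeft (Pi.mulSingle i (-1 : ℤˣ))) f
  simp only [Equiv.coe_mulLeft, hf, sum_neg_distrib] at h
  linarith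

lemma sum_signVec (i : ι) : ∑ s : ι → ℤˣ, signVec s i = 0 :=
  sum_eq_zero_of_flip i fun s => by simp [signVec_mulSingle_neg_one_mul]

lemma sum_signVec_mul_signVec (i j : ι) :
    ∑ s : ι → ℤˣ, signVec s i * signVec s j = if i = j then 2 ^ Fintype.card ι else 0 := by
  split_ifs with h
  · subst h
    simp [signVec_mul_self]
  · exact sum_eq_zero_of_flip i fun s => by simp [signVec_mulSingle_neg_one_mul, Ne.symm h]

lemma sum_signVec_dotProduct (u : ι → ℝ) : ∑ s : ι → ℤˣ, signVec s ⬝ᵥ u = 0 := by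
  simp only [dotProduct]
  rw [sum_comm]
  simp [← sum_mul, sum_signVec]

lemma sum_signVec_dotProduct_mul_signVec_dotProduct (u v : ι → ℝ) :
    ∑ s : ι → ℤˣ, (signVec s ⬝ᵥ u) * (signVec s ⬝ᵥ v) = 2 ^ Fintype.card ι * (u ⬝ᵥ v) := by
  calc ∑ s : ι → ℤˣ, (signVec s ⬝ᵥ u) * (signVec s ⬝ᵥ v)
      = ∑ i, ∑ j, u i * v j * ∑ s : ι → ℤˣ, signVec s i * signVec s j := by
        simp_rw [dotProduct, sum_mul_sum]
        rw [sum_comm]; refine sum_congr rfl fun i _ => ?_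
        rw [sum_comm]; refine sum_congr rfl fun j _ => ?_
        rw [mul_sum]; exact sum_congr rfl fun s _ => by ring
    _ = 2 ^ Fintype.card ι * (u ⬝ᵥ v) := by
        simp [sum_signVec_mul_signVec, dotProduct, mul_sum, mul_comm]

omit [DecidableEq ι] in
lemma abs_signVec_dotProduct_le (s : ι → ℤˣ) (u : ι → ℝ) :
    |signVec s ⬝ᵥ u| ≤ ∑ i, |u i| := by
  refine (abs_sum_le_sum_abs _ _).trans (le_of_eq (sum_congr rfl fun i _ => ?_))
  rw [abs_mul, abs_signVec, one_mul]

omit [DecidableEq ι] in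
lemma sq_sum_abs_le_card_mul_dotProduct_self (u : ι → ℝ) :
    (∑ i, |u i|) ^ 2 ≤ Fintype.card ι * (u ⬝ᵥ u) :=
  sq_sum_le_card_mul_sum_sq.trans_eq (by simp [dotProduct, sq])

end SignVectors

section CubeModel

variable {ι V : Type*} [Fintype ι] [AddCommGroup V] [Module ℝ V]
  (t : V →ₗ[ℝ] ℝ) (r : V →ₗ[ℝ] ι → ℝ)

def cubeMap (a c : ℝ) : V →ₗ[ℝ] (ι → ℤˣ) → ℝ where
  toFun A s := a * (t A + c * (signVec s ⬝ᵥ r A))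
  map_add' A B := by
    funext s
    simp only [map_add, dotProduct_add, Pi.add_apply]
    ring
  map_smul' x A := by
    funext s
    simp only [map_smul, dotProduct_smul, smul_eq_mul, RingHom.id_apply, Pi.smul_apply]
    ring

lemma cubeMap_apply (a c : ℝ) (A : V) (s : ι → ℤˣ) :
    cubeMap t r a c A s = a * (t A + c * (signVec s ⬝ᵥ r A)) := rfl

lemma cubeMap_nonneg {a c : ℝ} (ha : 0 ≤ a) (hc : 0 ≤ c) {A : V}
    (hA : c * ∑ i, |r A i| ≤ t A) (s : ι → ℤˣ) : 0 ≤ cubeMap t r a c A s := by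
  have hs := abs_signVec_dotProduct_le s (r A)
  rw [cubeMap_apply]
  refine mul_nonneg ha ?_
  nlinarith [neg_abs_le (signVec s ⬝ᵥ r A)]

variable [DecidableEq ι]

lemma sum_cubeMap (a c : ℝ) (A : V) :
    ∑ s, cubeMap t r a c A s = 2 ^ Fintype.card ι * a * t A := by
  simp only [cubeMap_apply, mul_add, sum_add_distrib, ← mul_sum, sum_signVec_dotProduct, mul_zero,
    add_zero, sum_const, card_univ, nsmul_eq_mul, natCast_card_signs]
  ring

lemma sum_cubeMap_mul_cubeMap (a c b d : ℝ) (A B : V) :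
    ∑ s, cubeMap t r a c A s * cubeMap t r b d B s
      = 2 ^ Fintype.card ι * a * b * (t A * t B + c * d * (r A ⬝ᵥ r B)) := by
  have expand : ∀ s : ι → ℤˣ, cubeMap t r a c A s * cubeMap t r b d B s
      = a * b * (t A * t B) + a * b * c * t B * (signVec s ⬝ᵥ r A)
        + a * b * d * t A * (signVec s ⬝ᵥ r B)
        + a * b * c * d * ((signVec s ⬝ᵥ r A) * (signVec s ⬝ᵥ r B)) := fun s => by
    rw [cubeMap_apply, cubeMap_apply]; ring
  simp only [expand, sum_add_distrib, ← mul_sum, sum_signVec_dotProduct,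
    sum_signVec_dotProduct_mul_signVec_dotProduct, mul_zero, add_zero, sum_const, card_univ,
    nsmul_eq_mul, natCast_card_signs]
  ring

end CubeModel

section Qubit

local notation "mat" A => ((A : HermMat 2) : Matrix (Fin 2) (Fin 2) ℂ)

def blochTrace : HermMat 2 →ₗ[ℝ] ℝ where
  toFun A := (Matrix.trace (mat A)).re
  map_add' A B := by simp [trace_add]
  map_smul' x A := by simp [trace_smul]

/-- The coordinates `(x, y, z)` of `A = (blochTrace A • 1 + x σₓ + y σ_y + z σ_z) / 2` in the basis
of Pauli matrices. -/
def blochVector : HermMat 2 →ₗ[ℝ] Fin 3 → ℝ where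
  toFun A := ![2 * ((mat A) 0 1).re, 2 * ((mat A) 1 0).im, ((mat A) 0 0).re - ((mat A) 1 1).re]
  map_add' A B := by
    simp only [AddSubgroup.coe_add, Matrix.add_apply, Complex.add_re, Complex.add_im,
      cons_add_cons, empty_add_empty]
    ring_nf
  map_smul' x A := by
    simp only [selfAdjoint.val_smul, Matrix.smul_apply, Complex.real_smul, Complex.re_ofReal_mul,
      Complex.im_ofReal_mul, smul_cons, Matrix.smul_empty, smul_eq_mul, RingHom.id_apply]
    ring_nf

lemma coe_hermMat_two (A : HermMat 2) :
    (mat A) = !![⟨(blochTrace A + blochVector A 2) / 2, 0⟩,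
                   ⟨blochVector A 0 / 2, -(blochVector A 1 / 2)⟩;
                 ⟨blochVector A 0 / 2, blochVector A 1 / 2⟩,
                   ⟨(blochTrace A - blochVector A 2) / 2, 0⟩] := by
  have hA : (mat A).IsHermitian := isHermitian_iff_isSelfAdjoint.mpr A.2
  have h00 : ((mat A) 0 0).im = 0 := Complex.conj_eq_iff_im.mp (hA.apply 0 0)
  have h11 : ((mat A) 1 1).im = 0 := Complex.conj_eq_iff_im.mp (hA.apply 1 1)
  have h10 : (mat A) 1 0 = star ((mat A) 0 1) := (hA.apply 1 0).symm
  ext i j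
  fin_cases i <;> fin_cases j <;> apply Complex.ext <;>
    simp [blochTrace, blochVector, trace_fin_two, h00, h11, h10, neg_div]

lemma trace_mul_hermMat_two (A B : HermMat 2) :
    ((mat A) * (mat B)).trace
      = ((blochTrace A * blochTrace B + blochVector A ⬝ᵥ blochVector B) / 2 : ℝ) := by
  rw [coe_hermMat_two A, coe_hermMat_two B, mul_fin_two, trace_fin_two_of]
  apply Complex.ext <;>
    simp only [Complex.add_re, Complex.add_im, Complex.mul_re, Complex.mul_im, Complex.ofReal_re,
      Complex.ofReal_im, dotProduct, Fin.sum_univ_three] <;> ring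

lemma det_hermMat_two (A : HermMat 2) :
    (mat A).det = ((blochTrace A ^ 2 - blochVector A ⬝ᵥ blochVector A) / 4 : ℝ) := by
  rw [coe_hermMat_two A, det_fin_two_of]
  apply Complex.ext <;>
    simp only [Complex.sub_re, Complex.sub_im, Complex.mul_re, Complex.mul_im, Complex.ofReal_re,
      Complex.ofReal_im, dotProduct, Fin.sum_univ_three] <;> ring

lemma frobeniusNorm_sub_half_one_sq (A : HermMat 2) :
    frobeniusNorm ((mat A) - (1 / 2 : ℂ) • 1) ^ 2
      = ((blochTrace A - 1) ^ 2 + blochVector A ⬝ᵥ blochVector A) / 2 := by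
  rw [frobeniusNorm, Real.sq_sqrt (by positivity), coe_hermMat_two A, one_fin_two]
  simp only [Fin.sum_univ_two, Fin.sum_univ_three, dotProduct, Matrix.sub_apply, Matrix.smul_apply,
    of_apply, cons_val', cons_val_zero, cons_val_one, cons_val_fin_one, smul_eq_mul, mul_one,
    mul_zero, Complex.sq_norm, Complex.normSq_apply, Complex.sub_re, Complex.sub_im,
    Complex.div_ofNat_re, Complex.div_ofNat_im, Complex.one_re, Complex.one_im, Complex.zero_re,
    Complex.zero_im]
  ring

lemma blochTrace_oneHerm : blochTrace (oneHerm 2) = 2 := by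
  simp [blochTrace, oneHerm]

lemma blochVector_oneHerm : blochVector (oneHerm 2) = 0 := by
  funext i; fin_cases i <;> simp [blochVector, oneHerm]

variable {A : HermMat 2}

lemma blochTrace_nonneg (hA : (mat A).PosSemidef) : 0 ≤ blochTrace A :=
  (Complex.nonneg_iff.mp hA.trace_nonneg).1

lemma blochVector_dotProduct_self_le_sq (hA : (mat A).PosSemidef) :
    blochVector A ⬝ᵥ blochVector A ≤ blochTrace A ^ 2 := by
  have h := hA.det_nonneg
  rw [det_hermMat_two, Complex.zero_le_real] at h
  linarith

lemma sum_abs_blochVector_le_two_mul_blochTrace (hA : (mat A).PosSemidef) :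
    ∑ i, |blochVector A i| ≤ 2 * blochTrace A := by
  have ht := blochTrace_nonneg hA
  refine le_of_pow_le_pow_left₀ two_ne_zero (by positivity) ?_
  calc (∑ i, |blochVector A i|) ^ 2 ≤ 3 * (blochVector A ⬝ᵥ blochVector A) := by
        simpa using sq_sum_abs_le_card_mul_dotProduct_self (blochVector A)
    _ ≤ 3 * blochTrace A ^ 2 := by gcongr; exact blochVector_dotProduct_self_le_sq hA
    _ ≤ (2 * blochTrace A) ^ 2 := by nlinarith

lemma two_mul_sum_abs_blochVector_le_one
    (hA : frobeniusNorm ((mat A) - (1 / 2 : ℂ) • 1) ≤ 1 / 5) :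
    2 * ∑ i, |blochVector A i| ≤ 1 := by
  have hF : 0 ≤ frobeniusNorm ((mat A) - (1 / 2 : ℂ) • 1) := Real.sqrt_nonneg _
  have hr : blochVector A ⬝ᵥ blochVector A ≤ 2 / 25 := by
    nlinarith [frobeniusNorm_sub_half_one_sq A]
  have hsum : (∑ i, |blochVector A i|) ^ 2 ≤ (1 / 2) ^ 2 := by
    have h := sq_sum_abs_le_card_mul_dotProduct_self (blochVector A)
    simp only [Fintype.card_fin, Nat.cast_ofNat] at h
    linarith
  linarith [le_of_pow_le_pow_left₀ two_ne_zero (by norm_num) hsum]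

end Qubit

/-- there is an `ε > 0` such that the set of all qubit states within Frobenius
distance `ε` of the maximally mixed state `I/2`, paired with the set of all effects, admits a
noncontextual ontological model. -/
theorem epsilon_ball_around_maximally_mixed_noncontextual :
    ∃ ε : ℝ, 0 < ε ∧
      ∃ (Λ : Type) (_ : Fintype Λ) (M Ξ : HermMat 2 →ₗ[ℝ] (Λ → ℝ)),
        (∀ ρ : HermMat 2, IsDensity ρ →
          frobeniusNorm ((ρ : Matrix (Fin 2) (Fin 2) ℂ) - (1 / 2 : ℂ) • 1) ≤ ε →
            (∀ l, 0 ≤ M ρ l) ∧ (∑ l, M ρ l) = 1) ∧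
        (∀ E : HermMat 2, IsEffect E → ∀ l, 0 ≤ Ξ E l) ∧
        (Ξ (oneHerm 2) = fun _ => 1) ∧
        (∀ ρ : HermMat 2, IsDensity ρ →
          frobeniusNorm ((ρ : Matrix (Fin 2) (Fin 2) ℂ) - (1 / 2 : ℂ) • 1) ≤ ε →
          ∀ E : HermMat 2, IsEffect E →
            ((E : Matrix (Fin 2) (Fin 2) ℂ) * (ρ : Matrix (Fin 2) (Fin 2) ℂ)).trace
              = ((∑ l, M ρ l * Ξ E l : ℝ) : ℂ)) := by
  refine ⟨1 / 5, by norm_num, Fin 3 → ℤˣ, inferInstance, cubeMap blochTrace blochVector (1 / 8) 2,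
    cubeMap blochTrace blochVector (1 / 2) (1 / 2), ?_, ?_, ?_, ?_⟩
  · intro ρ hρ hε
    have ht : blochTrace ρ = 1 := by simp [blochTrace, hρ.2]
    refine ⟨cubeMap_nonneg _ _ (by norm_num) (by norm_num) ?_, ?_⟩
    · linarith [two_mul_sum_abs_blochVector_le_one hε]
    · norm_num [sum_cubeMap, ht]
  · intro E hE
    have hr := sum_abs_blochVector_le_two_mul_blochTrace hE.1
    exact cubeMap_nonneg _ _ (by norm_num) (by norm_num) (by linarith)
  · funext s
    simp [cubeMap_apply, blochTrace_oneHerm, blochVector_oneHerm]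
  · intro ρ _ _ E _
    rw [trace_mul_hermMat_two, sum_cubeMap_mul_cubeMap, dotProduct_comm, Fintype.card_fin]
    push_cast
    ring
end
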